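/- For integers n, k, i with 1 ≤ i ≤ k ≤ n/2, the ratio C(n,i)·C(n-i,k-i)·C(n-k,k-i) / (C(n,k)·C(n-k,k)) is at most k^{2i}/ (n-2k)^i; in particular, Φ(i)/C(n,k)² ≤ k^{2i}/n^i · (1+o(1)) when k = o(n). -/

import Mathlib

/-!
Choosing the common part first gives `C(n,i)·C(n-i,k-i) = C(n,k)·C(k,i) ≤ C(n,k)·k^i`.
For the last factor, each step `C(m,j) → C(m,j+1)` with `j < k ≤ m` multiplies by
`(m-j)/(j+1) ≥ (m-k+1)/k`; descending `i` steps from `C(n-k,k)` with `m = n-k` gives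
`C(n-k,k-i) ≤ C(n-k,k)·(k/(n-2k+1))^i ≤ C(n,k)·(k/(n-2k+1))^i`.
-/

namespace Nat

theorem choose_mul_sub_add_one_le_choose_succ_mul {m j k : ℕ} (hjk : j < k) (hkm : k ≤ m) :
    m.choose j * (m - k + 1) ≤ m.choose (j + 1) * k :=
  calc m.choose j * (m - k + 1)
      ≤ m.choose j * (m - j) := Nat.mul_le_mul_left _ (by omega)
    _ = m.choose (j + 1) * (j + 1) := (choose_succ_right_eq m j).symm
    _ ≤ m.choose (j + 1) * k := Nat.mul_le_mul_left _ hjk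

theorem choose_sub_mul_pow_le {m k : ℕ} (hkm : k ≤ m) {i : ℕ} (hik : i ≤ k) :
    m.choose (k - i) * (m - k + 1) ^ i ≤ m.choose k * k ^ i := by
  induction i with
  | zero => simp
  | succ i ih =>
    have hstep := choose_mul_sub_add_one_le_choose_succ_mul (j := k - (i + 1)) (by omega) hkm
    rw [show k - (i + 1) + 1 = k - i by omega] at hstep
    calc m.choose (k - (i + 1)) * (m - k + 1) ^ (i + 1)
        = m.choose (k - (i + 1)) * (m - k + 1) * (m - k + 1) ^ i := by ring
      _ ≤ m.choose (k - i) * k * (m - k + 1) ^ i := Nat.mul_le_mul_right _ hstep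
      _ = m.choose (k - i) * (m - k + 1) ^ i * k := by ring
      _ ≤ m.choose k * k ^ i * k := Nat.mul_le_mul_right _ (ih (by omega))
      _ = m.choose k * k ^ (i + 1) := by ring

theorem choose_mul_choose_mul_choose_mul_pow_le {n k i : ℕ} (hik : i ≤ k) (hkn : 2 * k ≤ n) :
    n.choose i * (n - i).choose (k - i) * (n - k).choose (k - i) * (n - 2 * k + 1) ^ i
      ≤ n.choose k ^ 2 * k ^ (2 * i) := by
  have hcommon : n.choose i * (n - i).choose (k - i) = n.choose k * k.choose i :=
    (choose_mul hik).symm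
  have hrest : (n - k).choose (k - i) * (n - 2 * k + 1) ^ i ≤ n.choose k * k ^ i := by
    have h := choose_sub_mul_pow_le (m := n - k) (by omega) hik
    rw [show n - k - k = n - 2 * k by omega] at h
    exact h.trans (Nat.mul_le_mul_right _ (choose_le_choose k (by omega)))
  calc n.choose i * (n - i).choose (k - i) * (n - k).choose (k - i) * (n - 2 * k + 1) ^ i
      = n.choose k * k.choose i * ((n - k).choose (k - i) * (n - 2 * k + 1) ^ i) := by
        rw [hcommon]; ring
    _ ≤ n.choose k * k ^ i * (n.choose k * k ^ i) :=
        Nat.mul_le_mul (Nat.mul_le_mul_left _ (choose_le_pow k i)) hrest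
    _ = n.choose k ^ 2 * k ^ (2 * i) := by ring

end Nat

theorem choose_pair_ratio_bound_general (n k i : ℕ) (hik : i ≤ k) (hkn : 2 * k ≤ n) :
    (n.choose i : ℝ) * ((n - i).choose (k - i) : ℝ) * ((n - k).choose (k - i) : ℝ)
      ≤ (n.choose k : ℝ) ^ 2 * (k : ℝ) ^ (2 * i) / ((n : ℝ) - 2 * k + 1) ^ i := by
  have hcast : (n : ℝ) - 2 * k + 1 = ((n - 2 * k + 1 : ℕ) : ℝ) := by
    push_cast [Nat.cast_sub hkn]; ring
  rw [hcast, le_div_iff₀ (by positivity)]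
  exact_mod_cast Nat.choose_mul_choose_mul_choose_mul_pow_le hik hkn

/-- Combinatorial bound: for `1 ≤ i ≤ k` and `2k ≤ n`,
`C(n,i)·C(n-i,k-i)·C(n-k,k-i) ≤ C(n,k)² · k^{2i}/(n-2k+1)^i`. -/
theorem choose_pair_ratio_bound (n k i : ℕ) (hi : 1 ≤ i) (hik : i ≤ k) (hkn : 2 * k ≤ n) :
    (n.choose i : ℝ) * ((n - i).choose (k - i) : ℝ) * ((n - k).choose (k - i) : ℝ)
      ≤ (n.choose k : ℝ) ^ 2 * (k : ℝ) ^ (2 * i) / ((n : ℝ) - 2 * k + 1) ^ i :=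
  choose_pair_ratio_bound_general n k i hik hkn
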